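/- arXiv:1703.08631 — 7 statements merged into one kernel-verified Lean document; each statement's English description precedes it below -/
import Mathlib

section
/- Suppose d : {(n,m,k) : n,m ≥ 1, k ≥ 0} → ℚ satisfies: (i) d(1,m,k) = (−1)^k · (C(m+k, m−1) + C(m+k−1, m−1)) for all m ≥ 1, k ≥ 0; (ii) d(n,m,0) = C(n+m, n) for all n,m ≥ 1; and (iii) for all n ≥ 2, m ≥ 1, k ≥ 0, n·d(n,m,k) = Σ_{i=n+m−1}^{n+m+k−1} d(n−1, m, i−n−m+1)·d(1, i, n+m+k−1−i) − Σ_{j=n+1}^{n+k} d(1, n−1, j−n)·d(j, m, n+k−j). Then for all n, m ≥ 1 and k ≥ 0, d(n,m,k) = (−1)^k · (n+m+k−1)!/((n−1)!·(m−1)!·k!) · (n+m+2k)/((n+k)·(m+k)). -/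
/-!
Extend the closed form `E(n, m, k)` by `E(0, m, k) = E(n, 0, k) = δ_{k,0}`. It satisfies the
Pascal-type recurrences `E(p+1, q+1, k+1) = E(p, q+1, k+1) + E(p+1, q, k+1) - E(p+1, q+1, k)`
and `E(p+1, q+1, 0) = E(p, q+1, 0) + E(p+1, q, 0)`. Fed into the coefficients
`F(a, b, c, K) = ∑_{i+j=K} E(a, b, i) E(a+b+i, c, j)` of `(O^a O^b) O^c`, they give a recurrence
for `F` that is symmetric in `b` and `c`, so `F(a, b, c, K) = F(a, c, b, K)` by induction on
`a + b + c + K`: the constants `E` define a commutative associative product. Relation (iii) for `E`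
is exactly this symmetry, so `E` satisfies (i) and (iii). Since (iii) expresses `n d(n, m, k)`
through values with smaller `k`, or the same `k` and smaller `n`, it determines `d` from (i).
-/

open Finset Nat

-- `O^0 = 1`, so the constants with a vanishing index are `δ_{k,0}`.
noncomputable def structConst (n m k : ℕ) : ℚ :=
  if n = 0 ∨ m = 0 then if k = 0 then 1 else 0 else
    (-1) ^ k * ((n + m + k - 1).factorial : ℚ) /
          (((n - 1).factorial : ℚ) * ((m - 1).factorial : ℚ) * (k.factorial : ℚ)) *
          (((n : ℚ) + m + 2 * k) / (((n : ℚ) + k) * ((m : ℚ) + k)))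

theorem structConst_zero_left (m k : ℕ) : structConst 0 m k = if k = 0 then 1 else 0 := by
  simp [structConst]

theorem structConst_zero_right (n k : ℕ) : structConst n 0 k = if k = 0 then 1 else 0 := by
  simp [structConst]

theorem structConst_comm (n m k : ℕ) : structConst n m k = structConst m n k := by
  unfold structConst
  by_cases h : n = 0 ∨ m = 0
  · rw [if_pos h, if_pos h.symm]
  · rw [if_neg h, if_neg (by tauto), add_comm m n]
    ring

theorem structConst_succ_succ (x y z : ℕ) : structConst (x + 1) (y + 1) z =
    (-1) ^ z * (x + y + z + 1)! / (x ! * y ! * z !) *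
      ((x + y + 2 * z + 2) / ((x + z + 1) * (y + z + 1))) := by
  simp only [structConst, add_eq_zero, one_ne_zero, and_false, or_self, if_false,
    add_tsub_cancel_right]
  rw [show x + 1 + (y + 1) + z - 1 = x + y + z + 1 by omega]
  push_cast
  ring

theorem structConst_zero_eq_choose (n m : ℕ) : structConst n m 0 = (n + m).choose n := by
  rcases n with _ | x
  · simp [structConst]
  rcases m with _ | y
  · simp [structConst]
  rw [structConst_succ_succ, cast_add_choose, show x + 1 + (y + 1) = x + y + 0 + 1 + 1 by omega,
    factorial_succ (x + y + 0 + 1), factorial_succ x, factorial_succ y]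
  push_cast
  field_simp
  ring

theorem structConst_one_left (m k : ℕ) (hm : 1 ≤ m) :
    structConst 1 m k =
      (-1) ^ k * (((m + k).choose (m - 1) : ℚ) + ((m + k - 1).choose (m - 1) : ℚ)) := by
  obtain ⟨y, rfl⟩ : ∃ y, m = y + 1 := ⟨m - 1, by omega⟩
  rw [structConst_succ_succ 0 y k, show y + 1 + k - 1 = y + k by omega, add_tsub_cancel_right,
    show y + 1 + k = y + (k + 1) by omega, cast_add_choose, cast_add_choose,
    show y + (k + 1) = y + k + 1 by omega, show 0 + y + k + 1 = y + k + 1 by omega,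
    factorial_succ (y + k), factorial_succ k]
  push_cast
  field_simp
  ring

theorem structConst_succ_succ_succ (p q k : ℕ) :
    structConst (p + 1) (q + 1) (k + 1) =
      structConst p (q + 1) (k + 1) + structConst (p + 1) q (k + 1) -
        structConst (p + 1) (q + 1) k := by
  wlog hpq : p ≤ q generalizing p q
  · rw [structConst_comm (p + 1) (q + 1), structConst_comm p, structConst_comm (p + 1) q,
      structConst_comm (p + 1) (q + 1), this q p (by omega)]
    ring
  rcases p with _ | p
  · rcases q with _ | q
    · simp only [structConst_succ_succ, structConst_zero_left, structConst_zero_right,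
        add_eq_zero, one_ne_zero, and_false, if_false]
      rw [show 0 + 0 + (k + 1) + 1 = k + 1 + 1 by omega, show 0 + 0 + k + 1 = k + 1 by omega]
      simp only [factorial_succ (k + 1), factorial_succ k]
      push_cast
      field_simp
      ring
    · simp only [structConst_succ_succ, structConst_zero_left]
      rw [show 0 + (q + 1) + (k + 1) + 1 = q + k + 2 + 1 by omega,
        show 0 + q + (k + 1) + 1 = q + k + 2 by omega,
        show 0 + (q + 1) + k + 1 = q + k + 2 by omega]
      simp only [factorial_succ (q + k + 2), factorial_succ q, factorial_succ k]
      push_cast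
      field_simp
      ring
  · obtain ⟨q, rfl⟩ : ∃ q', q = q' + 1 := ⟨q - 1, by omega⟩
    simp only [structConst_succ_succ]
    rw [show p + 1 + (q + 1) + (k + 1) + 1 = p + q + k + 3 + 1 by omega,
      show p + (q + 1) + (k + 1) + 1 = p + q + k + 3 by omega,
      show p + 1 + q + (k + 1) + 1 = p + q + k + 3 by omega,
      show p + 1 + (q + 1) + k + 1 = p + q + k + 3 by omega]
    simp only [factorial_succ (p + q + k + 3), factorial_succ p, factorial_succ q, factorial_succ k]
    push_cast
    field_simp
    ring

theorem structConst_succ_succ_zero (p q : ℕ) :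
    structConst (p + 1) (q + 1) 0 = structConst p (q + 1) 0 + structConst (p + 1) q 0 := by
  simp only [structConst_zero_eq_choose, show p + 1 + (q + 1) = p + q + 1 + 1 by omega,
    choose_succ_succ, cast_add, add_right_comm p 1 q, add_assoc p q 1]

section Antidiagonal

variable {M : Type*} [AddCommGroup M] {f g h : ℕ × ℕ → M}

theorem Finset.Nat.sum_antidiagonal_succ_eq_sub_of_right (h0 : ∀ i, f (i, 0) = g (i, 0))
    (hs : ∀ i j, f (i, j + 1) = g (i, j + 1) - h (i, j)) (K : ℕ) :
    ∑ p ∈ antidiagonal (K + 1), f p =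
      ∑ p ∈ antidiagonal (K + 1), g p - ∑ p ∈ antidiagonal K, h p := by
  simp only [Finset.Nat.sum_antidiagonal_succ', h0, hs, sum_sub_distrib]
  abel

theorem Finset.Nat.sum_antidiagonal_succ_eq_sub_of_left (h0 : ∀ j, f (0, j) = g (0, j))
    (hs : ∀ i j, f (i + 1, j) = g (i + 1, j) - h (i, j)) (K : ℕ) :
    ∑ p ∈ antidiagonal (K + 1), f p =
      ∑ p ∈ antidiagonal (K + 1), g p - ∑ p ∈ antidiagonal K, h p := by
  simp only [Finset.Nat.sum_antidiagonal_succ, h0, hs, sum_sub_distrib]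
  abel

theorem Finset.sum_Icc_eq_sum_antidiagonal (a K : ℕ) :
    ∑ i ∈ Icc a (a + K), f (i - a, a + K - i) = ∑ p ∈ antidiagonal K, f p := by
  rw [Finset.Nat.sum_antidiagonal_eq_sum_range_succ_mk, ← Ico_add_one_right_eq_Icc,
    sum_Ico_eq_sum_range, show a + K + 1 - a = K + 1 by omega]
  refine sum_congr rfl fun i _ => ?_
  rw [show a + i - a = i by omega, show a + K - (a + i) = K - i by omega]

end Antidiagonal

-- The coefficient of `O^{a+b+c+K}` in `(O^a O^b) O^c`.
noncomputable def assocCoeff (a b c K : ℕ) : ℚ :=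
  ∑ p ∈ antidiagonal K, structConst a b p.1 * structConst (a + b + p.1) c p.2

theorem assocCoeff_zero_left (b c K : ℕ) : assocCoeff 0 b c K = structConst b c K := by
  rw [assocCoeff, Finset.Nat.sum_antidiagonal_eq_sum_range_succ_mk, sum_eq_single 0] <;>
    simp +contextual [structConst_zero_left]

theorem assocCoeff_zero_middle (a c K : ℕ) : assocCoeff a 0 c K = structConst a c K := by
  rw [assocCoeff, Finset.Nat.sum_antidiagonal_eq_sum_range_succ_mk, sum_eq_single 0] <;>
    simp +contextual [structConst_zero_right]

theorem assocCoeff_zero_right (a b K : ℕ) : assocCoeff a b 0 K = structConst a b K := by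
  rw [assocCoeff, Finset.Nat.sum_antidiagonal_eq_sum_range_succ_mk, sum_eq_single K]
  · simp [structConst_zero_right]
  · intro i hi hiK
    rw [structConst_zero_right, if_neg (by simp at hi; omega), mul_zero]
  · simp

theorem assocCoeff_zero_eq_choose (a b c : ℕ) :
    assocCoeff a b c 0 = (a + b + c).choose a * (b + c).choose b := by
  rw [assocCoeff]
  simp only [Finset.Nat.antidiagonal_zero, sum_singleton, add_zero, structConst_zero_eq_choose]
  rw [← cast_mul, ← cast_mul, mul_comm, choose_mul (n := a + b + c) (le_add_right a b), add_assoc,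
    Nat.add_sub_cancel_left, Nat.add_sub_cancel_left]

theorem assocCoeff_succ (a b c K : ℕ) :
    assocCoeff (a + 1) (b + 1) (c + 1) (K + 1) =
      assocCoeff a (b + 1) (c + 1) (K + 1) + assocCoeff (a + 1) b (c + 1) (K + 1) +
        assocCoeff (a + 1) (b + 1) c (K + 1) - 2 * assocCoeff (a + 1) (b + 1) (c + 1) K := by
  set G := ∑ p ∈ antidiagonal (K + 1),
    structConst (a + 1) (b + 1) p.1 * structConst (a + b + p.1 + 1) (c + 1) p.2
  have hsplit_c : assocCoeff (a + 1) (b + 1) (c + 1) (K + 1) =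
      G + assocCoeff (a + 1) (b + 1) c (K + 1) - assocCoeff (a + 1) (b + 1) (c + 1) K := by
    rw [assocCoeff, assocCoeff, assocCoeff, ← sum_add_distrib]
    refine Finset.Nat.sum_antidiagonal_succ_eq_sub_of_right (fun i => ?_) (fun i j => ?_) K
    all_goals
      rw [show a + 1 + (b + 1) + i = a + b + i + 1 + 1 by omega]
    · rw [structConst_succ_succ_zero]
      ring
    · rw [structConst_succ_succ_succ]
      ring
  have hG : G = assocCoeff a (b + 1) (c + 1) (K + 1) + assocCoeff (a + 1) b (c + 1) (K + 1) -
      assocCoeff (a + 1) (b + 1) (c + 1) K := by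
    rw [assocCoeff, assocCoeff, assocCoeff, ← sum_add_distrib]
    refine Finset.Nat.sum_antidiagonal_succ_eq_sub_of_left (fun j => ?_) (fun i j => ?_) K
      <;> dsimp only
    · rw [structConst_succ_succ_zero, show a + (b + 1) + 0 = a + b + 0 + 1 by omega,
        show a + 1 + b + 0 = a + b + 0 + 1 by omega]
      ring
    · rw [structConst_succ_succ_succ, show a + (b + 1) + (i + 1) = a + b + (i + 1) + 1 by omega,
        show a + 1 + b + (i + 1) = a + b + (i + 1) + 1 by omega,
        show a + 1 + (b + 1) + i = a + b + (i + 1) + 1 by omega]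
      ring
  rw [hsplit_c, hG]
  ring

theorem assocCoeff_comm : ∀ a b c K : ℕ, assocCoeff a b c K = assocCoeff a c b K
  | a, b, c, 0 => by
    rw [assocCoeff_zero_eq_choose, assocCoeff_zero_eq_choose, add_right_comm a b c, add_comm c b,
      choose_symm_add]
  | 0, b, c, K + 1 => by rw [assocCoeff_zero_left, assocCoeff_zero_left, structConst_comm]
  | a + 1, 0, c, K + 1 => by rw [assocCoeff_zero_middle, assocCoeff_zero_right]
  | a + 1, b + 1, 0, K + 1 => by rw [assocCoeff_zero_middle, assocCoeff_zero_right]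
  | a + 1, b + 1, c + 1, K + 1 => by
    rw [assocCoeff_succ, assocCoeff_succ, assocCoeff_comm a, assocCoeff_comm (a + 1) b,
      assocCoeff_comm (a + 1) (b + 1) c, assocCoeff_comm (a + 1) (b + 1) (c + 1) K]
    ring
termination_by a b c K => a + b + c + K

theorem assocCoeff_swap_left (a b c K : ℕ) : assocCoeff a b c K = assocCoeff b a c K := by
  simp only [assocCoeff, structConst_comm a b, add_comm a b]

theorem structConst_one_left_zero (q : ℕ) : structConst 1 q 0 = q + 1 := by
  rw [structConst_zero_eq_choose, add_comm, choose_one_right, cast_add, cast_one]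

theorem structConst_recursion (n m k : ℕ) (hn : 1 ≤ n) :
    (n : ℚ) * structConst n m k =
      (∑ i ∈ Icc (n + m - 1) (n + m + k - 1),
        structConst (n - 1) m (i + 1 - n - m) * structConst 1 i (n + m + k - 1 - i))
      - ∑ j ∈ Icc (n + 1) (n + k), structConst 1 (n - 1) (j - n) * structConst j m (n + k - j) := by
  have hA : ∑ i ∈ Icc (n + m - 1) (n + m + k - 1),
      structConst (n - 1) m (i + 1 - n - m) * structConst 1 i (n + m + k - 1 - i) =
        assocCoeff (n - 1) m 1 k := by
    rw [assocCoeff, ← Finset.sum_Icc_eq_sum_antidiagonal (n + m - 1),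
      show n + m + k - 1 = n + m - 1 + k by omega]
    refine sum_congr rfl fun i hi => ?_
    rw [mem_Icc] at hi
    rw [structConst_comm 1, show i + 1 - n - m = i - (n + m - 1) by omega,
      show n - 1 + m + (i - (n + m - 1)) = i by omega]
  have hB : assocCoeff 1 (n - 1) m k = n * structConst n m k +
      ∑ j ∈ Icc (n + 1) (n + k), structConst 1 (n - 1) (j - n) * structConst j m (n + k - j) := by
    rw [assocCoeff, ← Finset.sum_Icc_eq_sum_antidiagonal n,
      ← insert_Icc_add_one_left_eq_Icc (le_add_right n k), sum_insert (by simp)]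
    simp only [Nat.sub_self, add_zero, Nat.add_sub_cancel_left, structConst_one_left_zero,
      show 1 + (n - 1) = n by omega, cast_pred hn, sub_add_cancel]
    congr 1
    refine sum_congr rfl fun j hj => ?_
    rw [mem_Icc] at hj
    rw [show n + (j - n) = j by omega]
  rw [hA, assocCoeff_comm (n - 1), ← assocCoeff_swap_left, hB]
  ring

theorem stmt0_general (d : ℕ → ℕ → ℕ → ℚ)
    (h1 : ∀ m k : ℕ, 1 ≤ m →
      d 1 m k = (-1) ^ k * (((m + k).choose (m - 1) : ℚ) + ((m + k - 1).choose (m - 1) : ℚ)))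
    (h3 : ∀ n m k : ℕ, 2 ≤ n → 1 ≤ m →
      (n : ℚ) * d n m k =
        (∑ i ∈ Icc (n + m - 1) (n + m + k - 1), d (n - 1) m (i + 1 - n - m) * d 1 i (n + m + k - 1 - i))
        - ∑ j ∈ Icc (n + 1) (n + k), d 1 (n - 1) (j - n) * d j m (n + k - j)) :
    ∀ n m k : ℕ, 1 ≤ n → 1 ≤ m →
      d n m k = (-1) ^ k * ((n + m + k - 1).factorial : ℚ) /
          (((n - 1).factorial : ℚ) * ((m - 1).factorial : ℚ) * (k.factorial : ℚ)) *
          (((n : ℚ) + m + 2 * k) / (((n : ℚ) + k) * ((m : ℚ) + k))) := by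
  have hd1 : ∀ m k, 1 ≤ m → d 1 m k = structConst 1 m k := fun m k hm => by
    rw [h1 m k hm, structConst_one_left m k hm]
  suffices hd : ∀ k n m, 1 ≤ n → 1 ≤ m → d n m k = structConst n m k by
    intro n m k hn hm
    rw [hd k n m hn hm, structConst, if_neg (by omega)]
  intro k
  induction k using Nat.strong_induction_on with | _ k ihk => ?_
  intro n
  induction n using Nat.strong_induction_on with | _ n ihn => ?_
  intro m hn hm
  obtain rfl | hn2 : n = 1 ∨ 2 ≤ n := by omega
  · exact hd1 m k hm
  refine mul_left_cancel₀ (by positivity : (n : ℚ) ≠ 0) ?_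
  rw [h3 n m k hn2 hm, structConst_recursion n m k hn]
  congr 1 <;> refine sum_congr rfl fun i hi => ?_ <;> rw [mem_Icc] at hi
  · rw [hd1 i _ (by omega)]
    obtain hlt | heq : i + 1 - n - m < k ∨ i + 1 - n - m = k := by omega
    · rw [ihk _ hlt (n - 1) m (by omega) hm]
    · rw [heq, ihn (n - 1) (by omega) m (by omega) hm]
  · rw [hd1 (n - 1) _ (by omega), ihk (n + k - i) (by omega) i m (by omega) hm]

/-- If `d : ℕ → ℕ → ℕ → ℚ`, `d n m k` representing the ordinary `K`-theory structure
constant `d^{n+m+k}_{n,m}(1)`, satisfies the Chevalley base case, the lowest-order base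
case, and the associativity recursion, then it is given by the closed form. -/
theorem stmt0 (d : ℕ → ℕ → ℕ → ℚ)
    (h1 : ∀ m k : ℕ, 1 ≤ m →
      d 1 m k = (-1) ^ k * (((m + k).choose (m - 1) : ℚ) + ((m + k - 1).choose (m - 1) : ℚ)))
    (h2 : ∀ n m : ℕ, 1 ≤ n → 1 ≤ m → d n m 0 = ((n + m).choose n : ℚ))
    (h3 : ∀ n m k : ℕ, 2 ≤ n → 1 ≤ m →
      (n : ℚ) * d n m k =
        (∑ i ∈ Icc (n + m - 1) (n + m + k - 1), d (n - 1) m (i + 1 - n - m) * d 1 i (n + m + k - 1 - i))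
        - ∑ j ∈ Icc (n + 1) (n + k), d 1 (n - 1) (j - n) * d j m (n + k - j)) :
    ∀ n m k : ℕ, 1 ≤ n → 1 ≤ m →
      d n m k = (-1) ^ k * ((n + m + k - 1).factorial : ℚ) /
          (((n - 1).factorial : ℚ) * ((m - 1).factorial : ℚ) * (k.factorial : ℚ)) *
          (((n : ℚ) + m + 2 * k) / (((n : ℚ) + k) * ((m : ℚ) + k))) :=
  stmt0_general d h1 h3
end

section
/- For all integers n, m ≥ 1 and k ≥ 0, Σ_{j=0}^{k} (−1)^j · (n+m+j−1)!·(n+m+2j)/(n!·m!·j!) = (−1)^k · (n+m+k)!/(n!·m!·k!). -/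
/-!
With `F j = (-1)^j (N+j)!/j!`, the identity `(N+j)!/j! + (N+j-1)!/(j-1)! = (N+j-1)! (N+2j)/j!`
says that the `j`-th summand is `F j - F (j-1)`, so the sum telescopes to `F k`; the factor
`1/(n! m!)` just rides along.
-/

open Finset

theorem alternating_factorial_sum_eq (N k : ℕ) (hN : 1 ≤ N) :
    ∑ j ∈ range (k + 1), (-1 : ℚ) ^ j * ((N + j - 1).factorial : ℚ) * ((N : ℚ) + 2 * j) /
      (j.factorial : ℚ) = (-1) ^ k * ((N + k).factorial : ℚ) / (k.factorial : ℚ) := by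
  induction k with
  | zero =>
    obtain ⟨M, rfl⟩ := Nat.exists_eq_add_of_le' hN
    simp only [zero_add, range_one, sum_singleton, Nat.succ_add_sub_one, Nat.factorial_succ,
      Nat.factorial_zero, Nat.cast_mul, Nat.cast_add, Nat.cast_one, CharP.cast_eq_zero, pow_zero,
      add_zero, mul_zero, one_mul, div_one]
    ring
  | succ k ih =>
    rw [sum_range_succ, ih, show N + (k + 1) - 1 = N + k by omega, ← add_assoc N k 1,
      Nat.factorial_succ (N + k), Nat.factorial_succ k]
    push_cast
    field_simp
    ring

theorem stmt1_general (n m k : ℕ) (hn : 1 ≤ n) :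
    ∑ j ∈ range (k + 1),
      (-1 : ℚ) ^ j * ((n + m + j - 1).factorial : ℚ) * ((n : ℚ) + m + 2 * j) /
        ((n.factorial : ℚ) * (m.factorial : ℚ) * (j.factorial : ℚ))
      = (-1) ^ k * ((n + m + k).factorial : ℚ) /
          ((n.factorial : ℚ) * (m.factorial : ℚ) * (k.factorial : ℚ)) := by
  have h := alternating_factorial_sum_eq (n + m) k (by omega)
  push_cast at h
  simp_rw [mul_comm ((n.factorial : ℚ) * m.factorial), ← div_div, ← sum_div, h]

/-- The identity `Σ_{j=0}^{k} (−1)^j (n+m+j−1)!·(n+m+2j)/(n!·m!·j!) = (−1)^k (n+m+k)!/(n!·m!·k!)`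
establishing the closed form for the ideal-sheaf basis structure constants `b^{n+m+k}_{n,m}(1)`. -/
theorem stmt1 (n m k : ℕ) (hn : 1 ≤ n) (hm : 1 ≤ m) :
    ∑ j ∈ range (k + 1),
      (-1 : ℚ) ^ j * ((n + m + j - 1).factorial : ℚ) * ((n : ℚ) + m + 2 * j) /
        ((n.factorial : ℚ) * (m.factorial : ℚ) * (j.factorial : ℚ))
      = (-1) ^ k * ((n + m + k).factorial : ℚ) /
          ((n.factorial : ℚ) * (m.factorial : ℚ) * (k.factorial : ℚ)) :=
  stmt1_general n m k hn
end

section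
/- For all integers n, m ≥ 1 and j ≥ 0, D(n,m,j) − D(n+1,m,j−1) − D(n,m+1,j−1) + D(n+1,m+1,j−2) = (−1)^j · (n+m+j−1)!·(n+m+2j)/(n!·m!·j!), where a term D(n',m',k') is interpreted as 0 whenever k' < 0. -/
/-!
All four terms share the factor `(-1)^j (n+m+j-1)! / ((n-1)! (m-1)! j!)`. Measured against it,
the `1/(j-c)!` in `D n m (j - c)` becomes the descending factorial `j (j-1) ⋯ (j-c+1)` over `j!`,
which vanishes exactly when `j - c < 0`, so the convention `D = 0` at negative index is built in.
What remains is an identity between rational functions of `n`, `m`, `j`.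
-/

/-- The closed-form ordinary `K`-theory structure constant `D n m k = d^{n+m+k}_{n,m}(1)`,
extended by `0` to negative values of `k`. -/
noncomputable def D (n m : ℕ) (k : ℤ) : ℚ :=
  if 0 ≤ k then
    (-1) ^ k.toNat * ((n + m + k.toNat - 1).factorial : ℚ) /
        (((n - 1).factorial : ℚ) * ((m - 1).factorial : ℚ) * ((k.toNat).factorial : ℚ)) *
        (((n : ℚ) + m + 2 * (k.toNat : ℚ)) / (((n : ℚ) + (k.toNat : ℚ)) * ((m : ℚ) + (k.toNat : ℚ))))
  else 0

def normalizedD (n m j c : ℕ) : ℚ :=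
  (-1) ^ c * (j.descFactorial c : ℚ) * ((n : ℚ) + m + 2 * ((j : ℚ) - c)) /
    (((n + j - c : ℕ) : ℚ) * ((m + j - c : ℕ) : ℚ))

theorem D_natCast_sub (n m j c : ℕ) :
    D n m ((j : ℤ) - c) =
      (-1) ^ j * ((n + m + j - c - 1).factorial : ℚ) /
          (((n - 1).factorial : ℚ) * ((m - 1).factorial : ℚ) * (j.factorial : ℚ)) *
        normalizedD n m j c := by
  rcases le_or_gt c j with hcj | hjc
  · obtain ⟨k, rfl⟩ := Nat.exists_eq_add_of_le' hcj
    have hfac : ((k + c).factorial : ℚ) = k.factorial * (k + c).descFactorial c := by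
      rw [← Nat.factorial_mul_descFactorial hcj, Nat.add_sub_cancel]; push_cast; rfl
    have hdesc : ((k + c).descFactorial c : ℚ) ≠ 0 := by
      exact_mod_cast (Nat.descFactorial_eq_zero_iff_lt.not.mpr (by omega))
    have hsign : (-1 : ℚ) ^ (k + c) * (-1) ^ c = (-1) ^ k := by
      rw [pow_add, mul_assoc, ← pow_add, ← two_mul, pow_mul]; simp
    have hk : ((k + c : ℕ) : ℤ) - c = k := by push_cast; ring
    rw [D, hk, if_pos (Int.natCast_nonneg k), Int.toNat_natCast, hfac, normalizedD, ← hsign,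
      show n + m + (k + c) - c - 1 = n + m + k - 1 by omega,
      show n + (k + c) - c = n + k by omega, show m + (k + c) - c = m + k by omega]
    push_cast
    field_simp
    ring
  · rw [D, if_neg (by omega), normalizedD, Nat.descFactorial_eq_zero_iff_lt.mpr hjc]
    simp

theorem normalizedD_alternating_sum (n m j : ℕ) (hn : 1 ≤ n) (hm : 1 ≤ m) :
    n * m * normalizedD n m j 0 - m * normalizedD (n + 1) m j 1 - n * normalizedD n (m + 1) j 1
      + normalizedD (n + 1) (m + 1) j 2 = (n : ℚ) + m + 2 * j := by
  have hn' : (n : ℚ) ≠ 0 := by positivity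
  have hm' : (m : ℚ) ≠ 0 := by positivity
  rcases j with _ | i
  · simp only [normalizedD, Nat.descFactorial_zero, Nat.zero_descFactorial_succ, Nat.cast_zero,
      Nat.cast_one, mul_zero, zero_mul, zero_div, sub_zero, add_zero, Nat.sub_zero,
      pow_zero, one_mul, mul_one]
    field_simp
  · simp only [normalizedD, Nat.descFactorial_succ, Nat.descFactorial_zero, Nat.sub_zero,
      show ∀ k, k + (i + 1) - 1 = k + i by omega, show ∀ k, k + 1 + (i + 1) - 2 = k + i by omega]
    push_cast
    field_simp
    ring

/-- The fourth difference of the structure-sheaf structure constants: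
`D(n,m,j) − D(n+1,m,j−1) − D(n,m+1,j−1) + D(n+1,m+1,j−2) = (−1)^j (n+m+j−1)!·(n+m+2j)/(n!·m!·j!)`. -/
theorem stmt2 (n m j : ℕ) (hn : 1 ≤ n) (hm : 1 ≤ m) :
    D n m (j : ℤ) - D (n + 1) m ((j : ℤ) - 1) - D n (m + 1) ((j : ℤ) - 1)
        + D (n + 1) (m + 1) ((j : ℤ) - 2)
      = (-1) ^ j * ((n + m + j - 1).factorial : ℚ) * ((n : ℚ) + m + 2 * j) /
          ((n.factorial : ℚ) * (m.factorial : ℚ) * (j.factorial : ℚ)) := by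
  have h0 := D_natCast_sub n m j 0
  have h1 := D_natCast_sub (n + 1) m j 1
  have h2 := D_natCast_sub n (m + 1) j 1
  have h3 := D_natCast_sub (n + 1) (m + 1) j 2
  simp only [Nat.cast_zero, Nat.cast_one, Nat.cast_ofNat, sub_zero, Nat.sub_zero,
    Nat.add_sub_cancel] at h0 h1 h2 h3
  rw [h0, h1, h2, h3, ← normalizedD_alternating_sum n m j hn hm, ← Nat.mul_factorial_pred (by omega : n ≠ 0),
    ← Nat.mul_factorial_pred (by omega : m ≠ 0),
    show n + 1 + m + j - 1 - 1 = n + m + j - 1 by omega,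
    show n + (m + 1) + j - 1 - 1 = n + m + j - 1 by omega,
    show n + 1 + (m + 1) + j - 2 - 1 = n + m + j - 1 by omega]
  have hn' : (n : ℚ) ≠ 0 := by positivity
  have hm' : (m : ℚ) ≠ 0 := by positivity
  push_cast
  field_simp
end

section
/- For all integers k ≥ 0, Σ_{s=0}^{k} f(s,k) = 0. -/
/-! The substitution `s ↦ k - s` swaps the factors of `f` in pairs and flips the sign of
`2s - k`, so `f(k - s, k) = -f(s, k)` and the terms of the sum cancel in pairs. -/

open Finset

/-- The summand `f(s,k)` appearing in the key vanishing identity in the proof of the closed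
form for the ordinary `K`-theory structure constants. -/
noncomputable def f (n m k s : ℕ) : ℚ :=
  (1 / ((s.factorial : ℚ) * ((k - s).factorial : ℚ))) *
    (((n : ℚ) + m + 2 * k - s) * (2 * (s : ℚ) - k) * ((n : ℚ) + m + k + s) /
      (((s : ℚ) + m) * ((k : ℚ) + 1 - s) * ((s : ℚ) + 1) * ((m : ℚ) + k - s)))

theorem Finset.sum_range_succ_eq_zero_of_reflect_eq_neg {M : Type*} [AddCommGroup M]
    [IsAddTorsionFree M] (g : ℕ → M) (k : ℕ) (hg : ∀ s ≤ k, g (k - s) = -g s) :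
    ∑ s ∈ range (k + 1), g s = 0 := by
  rw [← neg_eq_self]
  calc -∑ s ∈ range (k + 1), g s = ∑ s ∈ range (k + 1), g (k - s) := by
        rw [← sum_neg_distrib]
        exact (sum_congr rfl fun s hs => hg s (Nat.lt_succ_iff.mp (mem_range.mp hs))).symm
    _ = ∑ s ∈ range (k + 1), g s := by
        simpa using sum_range_reflect g (k + 1)

theorem f_tsub_eq_neg (n m k s : ℕ) (hs : s ≤ k) : f n m k (k - s) = -f n m k s := by
  unfold f
  rw [Nat.sub_sub_self hs, Nat.cast_sub hs]
  ring

theorem stmt5_general (n m k : ℕ) :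
    ∑ s ∈ range (k + 1), f n m k s = 0 :=
  sum_range_succ_eq_zero_of_reflect_eq_neg (f n m k) k (f_tsub_eq_neg n m k)

/-- The key vanishing identity: `Σ_{s=0}^{k} f(s,k) = 0`. -/
theorem stmt5 (n m k : ℕ) (hn : 1 ≤ n) (hm : 1 ≤ m) :
    ∑ s ∈ range (k + 1), f n m k s = 0 :=
  stmt5_general n m k
end

section
/- For every integer k ≥ 1: if k is even then Σ_{j=1}^{k} q_j = (k(k+1)(k+2)/12)·(α₀ + α₁), and if k is odd then Σ_{j=1}^{k} q_j = ((k+1)(k²+2k+3)/12)·α₀ + ((k−1)(k+1)(k+3)/12)·α₁. -/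
open MvPolynomial Finset

/-- The equivariant Chevalley coefficient `q_j = ⌈j/2⌉²·α₀ + (⌊j/2⌋² + ⌊j/2⌋)·α₁`
in `ℚ[α₀, α₁]`, with `α₀ = X 0` and `α₁ = X 1`. -/
noncomputable def q (j : ℕ) : MvPolynomial (Fin 2) ℚ :=
  C ((((j + 1) / 2 : ℕ) : ℚ) ^ 2) * X 0 +
    C ((((j / 2 : ℕ) : ℚ)) ^ 2 + (((j / 2 : ℕ) : ℚ))) * X 1

/-
The consecutive terms `q (2m+1) + q (2m+2)` sum to `2(m+1)²·(α₀ + α₁)`, so the sums up to an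
even index are `2 Σ i²·(α₀ + α₁)`, and an odd sum adds one more term `q (2m+1)`.
-/

lemma q_two_mul_add_one (m : ℕ) :
    q (2 * m + 1) = C (((m : ℚ) + 1) ^ 2) * X 0 + C ((m : ℚ) ^ 2 + m) * X 1 := by
  rw [q, show (2 * m + 1 + 1) / 2 = m + 1 by omega, show (2 * m + 1) / 2 = m by omega]
  push_cast
  rfl

lemma q_two_mul_add_two (m : ℕ) :
    q (2 * m + 2) = C (((m : ℚ) + 1) ^ 2) * X 0 + C (((m : ℚ) + 1) ^ 2 + (m + 1)) * X 1 := by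
  rw [q, show (2 * m + 2 + 1) / 2 = m + 1 by omega, show (2 * m + 2) / 2 = m + 1 by omega]
  push_cast
  rfl

lemma q_two_mul_add_one_add_q_two_mul_add_two (m : ℕ) :
    q (2 * m + 1) + q (2 * m + 2) = C (2 * ((m : ℚ) + 1) ^ 2) * (X 0 + X 1) := by
  rw [q_two_mul_add_one, q_two_mul_add_two, add_add_add_comm, ← add_mul, ← add_mul, ← C_add,
    ← C_add, mul_add]
  congr 3 <;> ring

lemma sum_Icc_q_two_mul (m : ℕ) :
    ∑ j ∈ Icc 1 (2 * m), q j = C ((m : ℚ) * (m + 1) * (2 * m + 1) / 3) * (X 0 + X 1) := by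
  induction m with
  | zero => simp
  | succ m ih =>
    rw [show 2 * (m + 1) = 2 * m + 1 + 1 by ring, sum_Icc_succ_top (by omega),
      sum_Icc_succ_top (by omega), ih, add_assoc, q_two_mul_add_one_add_q_two_mul_add_two,
      ← add_mul, ← C_add]
    congr 2
    push_cast
    ring

theorem stmt12_general (k : ℕ) :
    (Even k → ∑ j ∈ Icc 1 k, q j
        = C ((k : ℚ) * ((k : ℚ) + 1) * ((k : ℚ) + 2) / 12) * (X 0 + X 1)) ∧
    (Odd k → ∑ j ∈ Icc 1 k, q j
        = C (((k : ℚ) + 1) * ((k : ℚ) ^ 2 + 2 * k + 3) / 12) * X 0 +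
          C (((k : ℚ) - 1) * ((k : ℚ) + 1) * ((k : ℚ) + 3) / 12) * X 1) := by
  constructor
  · rintro ⟨m, rfl⟩
    rw [← two_mul, sum_Icc_q_two_mul]
    congr 2
    push_cast
    ring
  · rintro ⟨m, rfl⟩
    rw [sum_Icc_succ_top (by omega), sum_Icc_q_two_mul, q_two_mul_add_one, mul_add,
      add_add_add_comm, ← add_mul, ← add_mul, ← C_add, ← C_add]
    congr 3 <;> push_cast <;> ring

/-- Closed form for `Σ_{j=1}^{k} q_j` according to the parity of `k`. -/
theorem stmt12 (k : ℕ) (hk : 1 ≤ k) :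
    (Even k → ∑ j ∈ Icc 1 k, q j
        = C ((k : ℚ) * ((k : ℚ) + 1) * ((k : ℚ) + 2) / 12) * (X 0 + X 1)) ∧
    (Odd k → ∑ j ∈ Icc 1 k, q j
        = C (((k : ℚ) + 1) * ((k : ℚ) ^ 2 + 2 * k + 3) / 12) * X 0 +
          C (((k : ℚ) - 1) * ((k : ℚ) + 1) * ((k : ℚ) + 3) / 12) * X 1) :=
  stmt12_general k
end

section
/- In the setup below, for every integer n ≥ 1: ε₁ⁿ = Σ_{k=1}^{n} k!·h_{n−k}(q₁, …, q_k)·ε_k. -/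
/-!
Multiplying `∑ c_k • ε_k` by `ε₁` and applying the Chevalley relation termwise produces the
coefficients `c_k q_k + k c_{k-1}`. The claimed coefficients `k! h_{n-k}(q₁, …, q_k)` satisfy
this recursion in `n`, because of the identity
`h_{d+1}(x₁, …, x_k) = h_{d+1}(x₁, …, x_{k-1}) + x_k h_d(x₁, …, x_k)`.
-/

open Finset

/-- `hsum d s x` is the complete homogeneous symmetric polynomial of degree `d` in the
variables `x i`, `i ∈ s`: the sum of all monomials of degree `d` in these variables
(with `hsum 0 s x = 1`). -/
def hsum {R : Type*} [CommSemiring R] (d : ℕ) (s : Finset ℕ) (x : ℕ → R) : R :=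
  ∑ μ ∈ s.sym d, ((μ : Multiset ℕ).map x).prod

section hsum

variable {R : Type*} [CommSemiring R]

@[simp]
lemma hsum_zero (s : Finset ℕ) (x : ℕ → R) : hsum 0 s x = 1 := by
  rw [hsum, sym_zero, sum_singleton]
  rfl

lemma hsum_empty {d : ℕ} (hd : d ≠ 0) (x : ℕ → R) : hsum d ∅ x = 0 := by
  rw [hsum, sym_eq_empty.2 ⟨hd, rfl⟩, sum_empty]

lemma hsum_insert {a : ℕ} {s : Finset ℕ} (ha : a ∉ s) (d : ℕ) (x : ℕ → R) :
    hsum d (insert a s) x = ∑ i ∈ range (d + 1), x a ^ i * hsum (d - i) s x := by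
  rw [hsum, ← sum_coe_sort, ← (symInsertEquiv ha).symm.sum_comp, Fintype.sum_sigma,
    ← Fin.sum_univ_eq_sum_range]
  refine sum_congr rfl fun i _ => ?_
  rw [hsum, mul_sum, ← sum_coe_sort (s.sym (d - i))]
  refine sum_congr rfl fun m _ => ?_
  simp [Sym.coe_fill, Sym.coe_replicate, mul_comm]

lemma hsum_succ_insert {a : ℕ} {s : Finset ℕ} (ha : a ∉ s) (d : ℕ) (x : ℕ → R) :
    hsum (d + 1) (insert a s) x = hsum (d + 1) s x + x a * hsum d (insert a s) x := by
  rw [hsum_insert ha, hsum_insert ha, sum_range_succ', mul_sum]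
  simp only [pow_succ, pow_zero, one_mul, Nat.sub_zero, Nat.add_sub_add_right]
  rw [add_comm]
  congr 1
  exact sum_congr rfl fun i _ => by ring

end hsum

open Nat in
lemma factorial_smul_hsum_Icc_succ {R : Type*} [CommSemiring R] (x : ℕ → R) {n k : ℕ}
    (hk : 1 ≤ k) (hkn : k ≤ n) :
    k ! • hsum (n + 1 - k) (Icc 1 k) x =
      k ! • hsum (n - k) (Icc 1 k) x * x k +
        k • ((k - 1)! • hsum (n - (k - 1)) (Icc 1 (k - 1)) x) := by
  obtain ⟨j, rfl⟩ : ∃ j, k = j + 1 := ⟨k - 1, by omega⟩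
  obtain ⟨d, rfl⟩ : ∃ d, n = j + 1 + d := ⟨n - (j + 1), by omega⟩
  have hIcc : Icc 1 (j + 1) = insert (j + 1) (Icc 1 j) :=
    (insert_Icc_right_eq_Icc_add_one (by omega)).symm
  rw [show j + 1 + d + 1 - (j + 1) = d + 1 by omega, show j + 1 + d - (j + 1) = d by omega,
    show j + 1 + d - (j + 1 - 1) = d + 1 by omega, Nat.add_sub_cancel, hIcc,
    hsum_succ_insert (by simp)]
  simp only [factorial_succ, nsmul_eq_mul]
  push_cast
  ring

lemma mul_sum_Icc_smul_of_chevalley {R A : Type*} [CommSemiring R] [Semiring A] [Algebra R A]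
    {q : ℕ → R} {ε : ℕ → A}
    (hchev : ∀ m : ℕ, 1 ≤ m → ε 1 * ε m = q m • ε m + (m + 1) • ε (m + 1))
    (c : ℕ → R) (hc : c 0 = 0) (n : ℕ) :
    ε 1 * ∑ k ∈ Icc 1 n, c k • ε k =
      ∑ k ∈ Icc 1 n, (c k * q k + k • c (k - 1)) • ε k +
        ((n + 1) • c n) • ε (n + 1) := by
  induction n with
  | zero => simp [hc]
  | succ n ih =>
    rw [sum_Icc_succ_top (by omega), mul_add, ih, sum_Icc_succ_top (by omega), mul_smul_comm,
      hchev _ (by omega), Nat.add_sub_cancel]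
    module

/-- If `ε₁·ε_m = q_m·ε_m + (m+1)·ε_{m+1}` for all `m ≥ 1`, then
`ε₁ⁿ = Σ_{k=1}^{n} k!·h_{n−k}(q₁, …, q_k)·ε_k` for all `n ≥ 1`. -/
theorem stmt13 {R A : Type*} [CommRing R] [CommRing A] [Algebra R A]
    (q : ℕ → R) (ε : ℕ → A)
    (hchev : ∀ m : ℕ, 1 ≤ m → ε 1 * ε m = q m • ε m + (m + 1) • ε (m + 1)) :
    ∀ n : ℕ, 1 ≤ n →
      ε 1 ^ n = ∑ k ∈ Icc 1 n, (k.factorial • hsum (n - k) (Icc 1 k) q) • ε k := by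
  intro n hn
  induction n, hn using Nat.le_induction with
  | base => simp
  | succ n hn ih =>
    have hc0 : (0 : ℕ).factorial • hsum (n - 0) (Icc 1 0) q = 0 := by
      simp [hsum_empty (d := n) (by omega)]
    rw [pow_succ', ih, mul_sum_Icc_smul_of_chevalley hchev _ hc0, sum_Icc_succ_top (by omega)]
    congr 1
    · exact sum_congr rfl fun k hk => by
        rw [factorial_smul_hsum_Icc_succ q (mem_Icc.1 hk).1 (mem_Icc.1 hk).2]
    · simp [Nat.factorial_succ, mul_smul]
end

section
/- Let R be a commutative ring and let d : ℕ×ℕ×ℕ → R, written d^k_{n,m} := d(n,m,k), satisfy: (i) d^k_{n,m} = 0 whenever k < n or k < m; and (ii) for all n, m, k ≥ 0 the relation Σ_{i=0}^{k} d^i_{n,m}·d^k_{1,i} = Σ_{j=0}^{k} d^j_{1,n}·d^k_{j,m}. Then for all n, m, k ≥ 0 with k > n: (d^n_{1,n} − d^k_{1,k})·d^k_{n,m} = Σ_{i=max(n,m)}^{k−1} d^i_{n,m}·d^k_{1,i} − Σ_{j=n+1}^{k} d^j_{1,n}·d^k_{j,m}. -/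
open Finset

/-!
Split off the extreme terms of the associativity relation at `(n, m, k)`: by the support
condition the left sum starts at `i = max n m` and its top term is `d^k_{n,m} d^k_{1,k}`,
while the right sum starts at `j = n` with bottom term `d^n_{1,n} d^k_{n,m}`. Moving these two
terms to one side gives the formula.
-/

theorem Finset.sum_range_eq_sum_Ico_of_eq_zero {M : Type*} [AddCommMonoid M] {f : ℕ → M}
    {a : ℕ} (hf : ∀ i < a, f i = 0) (b : ℕ) :
    ∑ i ∈ range b, f i = ∑ i ∈ Ico a b, f i := by
  rw [range_eq_Ico]
  refine (sum_subset (Ico_subset_Ico_left (Nat.zero_le a)) fun i hi hia => hf i ?_).symm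
  simp only [mem_Ico] at hi hia
  omega

theorem Finset.sum_range_succ_eq_sum_Icc_add_of_eq_zero {M : Type*} [AddCommMonoid M]
    {f : ℕ → M} {a : ℕ} (hf : ∀ i < a, f i = 0) (k : ℕ) :
    ∑ i ∈ range (k + 1 + 1), f i = ∑ i ∈ Icc a k, f i + f (k + 1) := by
  rw [sum_range_succ, sum_range_eq_sum_Ico_of_eq_zero hf, Ico_add_one_right_eq_Icc]

theorem Finset.sum_range_succ_eq_add_sum_Icc_of_eq_zero {M : Type*} [AddCommMonoid M]
    {f : ℕ → M} {n k : ℕ} (hf : ∀ i < n, f i = 0) (hnk : n ≤ k) :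
    ∑ i ∈ range (k + 1), f i = f n + ∑ i ∈ Icc (n + 1) k, f i := by
  rw [sum_range_eq_sum_Ico_of_eq_zero hf, sum_eq_sum_Ico_succ_bot (Nat.lt_add_one_of_le hnk),
    Ico_add_one_right_eq_Icc]

/-- If the structure constants `d^k_{n,m} = d n m k` (with values in a commutative ring)
satisfy the support condition and the associativity relation, then they satisfy the
inductive formula
`(d^n_{1,n} − d^k_{1,k})·d^k_{n,m} = Σ_{i=max(n,m)}^{k−1} d^i_{n,m}·d^k_{1,i} − Σ_{j=n+1}^{k} d^j_{1,n}·d^k_{j,m}`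
for `k > n`. -/
theorem stmt18 {R : Type*} [CommRing R] (d : ℕ → ℕ → ℕ → R)
    (hsupp : ∀ n m k : ℕ, k < n ∨ k < m → d n m k = 0)
    (hassoc : ∀ n m k : ℕ,
      ∑ i ∈ range (k + 1), d n m i * d 1 i k = ∑ j ∈ range (k + 1), d 1 n j * d j m k) :
    ∀ n m k : ℕ, n < k →
      (d 1 n n - d 1 k k) * d n m k
        = ∑ i ∈ Icc (max n m) (k - 1), d n m i * d 1 i k
          - ∑ j ∈ Icc (n + 1) k, d 1 n j * d j m k := by
  intro n m k hnk
  obtain ⟨k, rfl⟩ : ∃ k', k = k' + 1 := ⟨k - 1, by omega⟩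
  have hleft := sum_range_succ_eq_sum_Icc_add_of_eq_zero
    (f := fun i => d n m i * d 1 i (k + 1)) (a := max n m)
    (fun i hi => by rw [hsupp n m i (lt_max_iff.mp hi), zero_mul]) k
  have hright := sum_range_succ_eq_add_sum_Icc_of_eq_zero
    (f := fun j => d 1 n j * d j m (k + 1))
    (fun j hj => by rw [hsupp 1 n j (Or.inr hj), zero_mul]) (by omega : n ≤ k + 1)
  have hrel := hassoc n m (k + 1)
  rw [hleft, hright] at hrel
  rw [Nat.add_sub_cancel]
  linear_combination -hrel
end
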